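/- Let 0 < T ≤ π/2, π − T < φ_W < π, and T < −tan φ_W (i.e., (φ_W, T) ∈ D₂'). Then F¹_{φ_W,T} has exactly two roots in the open interval (0,1). -/

import Mathlib

open Real

/-- The determinant function
`F¹_{φ_W,T}(a) = -2a - a² sin(2aT) sin(2φ_W) - sin(2aT) sin(2φ_W) + 2a cos(2aT) cos(2φ_W)`. -/
noncomputable def F1 (φW T a : ℝ) : ℝ :=
  -2 * a - a ^ 2 * Real.sin (2 * a * T) * Real.sin (2 * φW)
    - Real.sin (2 * a * T) * Real.sin (2 * φW)
    + 2 * a * Real.cos (2 * a * T) * Real.cos (2 * φW)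

/-! Write `φW = π - θ`, so that `0 < θ < T ≤ π / 2` and `T < tan θ`. Then `F1` factors as
`-4 (a cos(aT) sin θ - sin(aT) cos θ) (cos(aT) sin θ - a sin(aT) cos θ)`.

On `(0, 1)` the second factor vanishes iff `a tan(aT) = tan θ`. It is strictly decreasing on
`[0, 1]`, from `sin θ > 0` to `sin (θ - T) < 0`, so it has exactly one root.

The first factor vanishes iff `tan(aT) / (aT) = tan θ / T`. Since `tan` is strictly convex on
`[0, π / 2)`, `tan x / x` is strictly increasing there, so there is at most one root. There is one
because the factor vanishes at `0` with slope `sin θ - T cos θ > 0` (this is `T < tan θ`) and is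
negative at `θ / T`.

If both factors vanished at `a`, then `tan θ = a tan(aT) = a² tan θ`, which is impossible. -/

open Set Filter Topology

lemma Set.encard_setOf_or_eq_two {α : Type*} {s : Set α} {p q : α → Prop}
    (hp : ∃! x, x ∈ s ∧ p x) (hq : ∃! x, x ∈ s ∧ q x) (hpq : ∀ x ∈ s, p x → ¬ q x) :
    {x ∈ s | p x ∨ q x}.encard = 2 := by
  obtain ⟨x, ⟨hxs, hpx⟩, hx⟩ := hp
  obtain ⟨y, ⟨hys, hqy⟩, hy⟩ := hq
  have hxy : x ≠ y := by rintro rfl; exact hpq x hxs hpx hqy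
  convert encard_pair hxy
  ext z
  constructor
  · rintro ⟨hzs, hz | hz⟩
    exacts [Or.inl (hx z ⟨hzs, hz⟩), Or.inr (hy z ⟨hzs, hz⟩)]
  · rintro (rfl | rfl)
    exacts [⟨hxs, Or.inl hpx⟩, ⟨hys, Or.inr hqy⟩]

lemma exists_mem_Ioo_lt_of_hasDerivAt_pos {f : ℝ → ℝ} {f' x b : ℝ} (hf : HasDerivAt f f' x)
    (hf' : 0 < f') (hxb : x < b) : ∃ y ∈ Ioo x b, f x < f y := by
  have hslope : ∀ᶠ y in 𝓝[>] x, 0 < slope f x y :=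
    ((hasDerivAt_iff_tendsto_slope.1 hf).mono_left (nhdsGT_le_nhdsNE x)).eventually
      (eventually_gt_nhds hf')
  obtain ⟨y, hy, hxy⟩ := (hslope.and (Ioo_mem_nhdsGT hxb)).exists
  exact ⟨y, hxy, (slope_pos_iff_of_le hxy.1.le).1 hy⟩

namespace Real

lemma strictConvexOn_tan : StrictConvexOn ℝ (Ico 0 (π / 2)) tan := by
  have hcos : ∀ x ∈ Ico 0 (π / 2), 0 < cos x := fun x hx =>
    cos_pos_of_mem_Ioo ⟨by linarith [hx.1, pi_pos], hx.2⟩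
  refine StrictMonoOn.strictConvexOn_of_deriv (convex_Ico _ _)
    (continuousOn_tan.mono fun x hx => (hcos x hx).ne') ?_
  rw [interior_Ico]
  intro x hx y hy hxy
  simp only [deriv_tan]
  have hcy := hcos y (Ioo_subset_Ico_self hy)
  have : cos y < cos x :=
    cos_lt_cos_of_nonneg_of_le_pi_div_two hx.1.le hy.2.le hxy
  gcongr

lemma strictMonoOn_tan_div_self : StrictMonoOn (fun x => tan x / x) (Ioo 0 (π / 2)) := by
  intro x hx y hy hxy
  have := strictConvexOn_tan.secant_strict_mono (a := 0) ⟨le_rfl, by positivity⟩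
    (Ioo_subset_Ico_self hx) (Ioo_subset_Ico_self hy) hx.1.ne' hy.1.ne' hxy
  simpa using this

end Real

noncomputable def F1Left (θ T a : ℝ) : ℝ := a * cos (a * T) * sin θ - sin (a * T) * cos θ

noncomputable def F1Right (θ T a : ℝ) : ℝ := cos (a * T) * sin θ - a * sin (a * T) * cos θ

lemma F1_pi_sub_eq_mul (θ T a : ℝ) :
    F1 (π - θ) T a = -4 * F1Left θ T a * F1Right θ T a := by
  unfold F1 F1Left F1Right
  rw [show 2 * a * T = 2 * (a * T) by ring, mul_sub, sin_two_mul (a * T), cos_two_mul (a * T),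
    sin_sub, cos_sub, sin_two_mul, cos_two_mul, sin_two_mul, cos_two_mul]
  simp only [sin_pi, cos_pi]
  linear_combination (4 * a * cos (a * T) ^ 2) * sin_sq_add_cos_sq θ
    + (4 * a * cos θ ^ 2) * sin_sq_add_cos_sq (a * T)

section Roots

variable {θ T : ℝ}

lemma continuous_F1Left : Continuous (F1Left θ T) := by
  unfold F1Left; fun_prop

lemma continuous_F1Right : Continuous (F1Right θ T) := by
  unfold F1Right; fun_prop

lemma hasDerivAt_F1Left_zero : HasDerivAt (F1Left θ T) (sin θ - T * cos θ) 0 := by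
  have hlin : HasDerivAt (fun a : ℝ => a * T) T 0 := by
    simpa using (hasDerivAt_id (0 : ℝ)).mul_const T
  have h := (((hasDerivAt_id' (0 : ℝ)).mul hlin.cos).mul_const (sin θ)).sub
    (hlin.sin.mul_const (cos θ))
  simp only [one_mul, zero_mul, cos_zero, sin_zero, add_zero, mul_one] at h
  exact h

variable (hθ : 0 < θ) (hθT : θ < T) (hT : T ≤ π / 2)
include hθ hθT hT

lemma mul_mem_Ioo_zero_pi_div_two {a : ℝ} (ha : a ∈ Ioo 0 1) : a * T ∈ Ioo 0 (π / 2) :=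
  ⟨mul_pos ha.1 (hθ.trans hθT), by nlinarith [ha.2]⟩

lemma F1Right_strictAntiOn : StrictAntiOn (F1Right θ T) (Icc 0 1) := by
  intro x hx y hy hxy
  have hT0 : 0 < T := hθ.trans hθT
  have hcosθ : 0 < cos θ := cos_pos_of_mem_Ioo ⟨by linarith, by linarith⟩
  have hsinθ : 0 < sin θ := sin_pos_of_pos_of_lt_pi hθ (by linarith)
  have hxT : 0 ≤ x * T := mul_nonneg hx.1 hT0.le
  have hyT : y * T ≤ π / 2 := by nlinarith [hy.2]
  have hxyT : x * T < y * T := by gcongr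
  have hcos : cos (y * T) < cos (x * T) :=
    cos_lt_cos_of_nonneg_of_le_pi_div_two hxT hyT hxyT
  have hsin : sin (x * T) ≤ sin (y * T) :=
    sin_le_sin_of_le_of_le_pi_div_two (by linarith) hyT hxyT.le
  have hsinx : 0 ≤ sin (x * T) := sin_nonneg_of_nonneg_of_le_pi hxT (by linarith [pi_pos])
  have h1 : cos (y * T) * sin θ < cos (x * T) * sin θ := mul_lt_mul_of_pos_right hcos hsinθ
  have h2 : x * sin (x * T) * cos θ ≤ y * sin (y * T) * cos θ :=
    mul_le_mul_of_nonneg_right (mul_le_mul hxy.le hsin hsinx hy.1) hcosθ.le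
  unfold F1Right
  linarith

lemma existsUnique_F1Right_eq_zero : ∃! a, a ∈ Ioo 0 1 ∧ F1Right θ T a = 0 := by
  have h0 : 0 < F1Right θ T 0 := by
    simpa [F1Right] using sin_pos_of_pos_of_lt_pi hθ (by linarith [pi_pos])
  have h1 : F1Right θ T 1 < 0 := by
    have : F1Right θ T 1 = sin (θ - T) := by simp only [F1Right, sin_sub, one_mul]; ring
    rw [this]
    exact sin_neg_of_neg_of_neg_pi_lt (by linarith) (by linarith [pi_pos])
  obtain ⟨a, ha, hroot⟩ :=
    intermediate_value_Ioo' zero_le_one continuous_F1Right.continuousOn ⟨h1, h0⟩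
  refine ⟨a, ⟨ha, hroot⟩, fun b hb => (F1Right_strictAntiOn hθ hθT hT).injOn
    (Ioo_subset_Icc_self hb.1) (Ioo_subset_Icc_self ha) (hb.2.trans hroot.symm)⟩

lemma F1Left_eq_zero_iff {a : ℝ} (ha : a ∈ Ioo 0 1) :
    F1Left θ T a = 0 ↔ tan (a * T) / (a * T) = tan θ / T := by
  have hT0 : 0 < T := hθ.trans hθT
  have hcosθ : 0 < cos θ := cos_pos_of_mem_Ioo ⟨by linarith, by linarith⟩
  have haT := mul_mem_Ioo_zero_pi_div_two hθ hθT hT ha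
  have hcos : 0 < cos (a * T) := cos_pos_of_mem_Ioo ⟨by linarith [haT.1], haT.2⟩
  have key : sin (a * T) * (cos θ * T) - sin θ * (cos (a * T) * (a * T))
      = -T * F1Left θ T a := by
    unfold F1Left; ring
  rw [tan_eq_sin_div_cos, tan_eq_sin_div_cos, div_div, div_div,
    div_eq_div_iff (mul_pos hcos haT.1).ne' (by positivity),
    ← sub_eq_zero (a := sin (a * T) * _), key, mul_eq_zero, neg_eq_zero, or_iff_right hT0.ne']

lemma F1Right_ne_zero_of_F1Left_eq_zero {a : ℝ} (ha : a ∈ Ioo 0 1) (h : F1Left θ T a = 0) :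
    F1Right θ T a ≠ 0 := by
  intro h'
  have hcosθ : 0 < cos θ := cos_pos_of_mem_Ioo ⟨by linarith, by linarith⟩
  have haT := mul_mem_Ioo_zero_pi_div_two hθ hθT hT ha
  have hsin : 0 < sin (a * T) := sin_pos_of_pos_of_lt_pi haT.1 (by linarith [haT.2, pi_pos])
  have key : sin (a * T) * cos θ * (1 - a ^ 2) = a * F1Right θ T a - F1Left θ T a := by
    unfold F1Left F1Right; ring
  rw [h, h', mul_zero, sub_zero] at key
  have : 0 < 1 - a ^ 2 := by nlinarith [ha.1, ha.2]
  exact (mul_pos (mul_pos hsin hcosθ) this).ne' key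

lemma existsUnique_F1Left_eq_zero (htan : T < tan θ) :
    ∃! a, a ∈ Ioo 0 1 ∧ F1Left θ T a = 0 := by
  have hT0 : 0 < T := hθ.trans hθT
  have hcosθ : 0 < cos θ := cos_pos_of_mem_Ioo ⟨by linarith, by linarith⟩
  have hsinθ : 0 < sin θ := sin_pos_of_pos_of_lt_pi hθ (by linarith [pi_pos])
  have hθT' : θ / T < 1 := (div_lt_one hT0).2 hθT
  have hderiv : 0 < sin θ - T * cos θ := by
    rw [tan_eq_sin_div_cos, lt_div_iff₀ hcosθ] at htan; linarith
  obtain ⟨a₀, ha₀, hpos⟩ :=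
    exists_mem_Ioo_lt_of_hasDerivAt_pos hasDerivAt_F1Left_zero hderiv (div_pos hθ hT0)
  have hneg : F1Left θ T (θ / T) < 0 := by
    have : F1Left θ T (θ / T) = sin θ * cos θ * (θ / T - 1) := by
      simp only [F1Left, div_mul_cancel₀ θ hT0.ne']; ring
    rw [this]
    exact mul_neg_of_pos_of_neg (by positivity) (by linarith)
  obtain ⟨a, ha, hroot⟩ := intermediate_value_Ioo' ha₀.2.le continuous_F1Left.continuousOn
    ⟨hneg, by simpa [F1Left] using hpos⟩
  have ha01 : a ∈ Ioo 0 1 := ⟨ha₀.1.trans ha.1, ha.2.trans hθT'⟩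
  refine ⟨a, ⟨ha01, hroot⟩, fun b ⟨hb, hbroot⟩ => ?_⟩
  have := (F1Left_eq_zero_iff hθ hθT hT hb).1 hbroot
  rw [← (F1Left_eq_zero_iff hθ hθT hT ha01).1 hroot] at this
  exact mul_right_cancel₀ hT0.ne' (strictMonoOn_tan_div_self.injOn
    (mul_mem_Ioo_zero_pi_div_two hθ hθT hT hb) (mul_mem_Ioo_zero_pi_div_two hθ hθT hT ha01) this)

end Roots

theorem F1_two_roots_on_D2'_general (φW T : ℝ) (hT : T ≤ Real.pi / 2)
    (hφ1 : Real.pi - T < φW) (hφ2 : φW < Real.pi) (htan : T < -Real.tan φW) :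
    {a ∈ Set.Ioo (0:ℝ) 1 | F1 φW T a = 0}.encard = 2 := by
  obtain ⟨θ, rfl⟩ : ∃ θ, φW = π - θ := ⟨π - φW, by ring⟩
  have hθ : 0 < θ := by linarith
  have hθT : θ < T := by linarith
  rw [tan_pi_sub, neg_neg] at htan
  simp only [F1_pi_sub_eq_mul, mul_eq_zero, neg_eq_zero, four_ne_zero, false_or]
  exact encard_setOf_or_eq_two (existsUnique_F1Left_eq_zero hθ hθT hT htan)
    (existsUnique_F1Right_eq_zero hθ hθT hT)
    (fun a ha => F1Right_ne_zero_of_F1Left_eq_zero hθ hθT hT ha)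

theorem F1_two_roots_on_D2' (φW T : ℝ) (hT0 : 0 < T) (hT : T ≤ Real.pi / 2)
    (hφ1 : Real.pi - T < φW) (hφ2 : φW < Real.pi) (htan : T < -Real.tan φW) :
    {a ∈ Set.Ioo (0:ℝ) 1 | F1 φW T a = 0}.encard = 2 :=
  F1_two_roots_on_D2'_general φW T hT hφ1 hφ2 htan
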